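/- arXiv:2305.09028 — 2 statements merged into one kernel-verified Lean document; each statement's English description precedes it below -/
import Mathlib

section
/- Let W ∈ ℝ^{n×r}, F ∈ ℝ^{n×r}, B ∈ ℝ^{r×n}, and let A ∈ ℝ^{r×r} be invertible. Then ‖W·A·Wᵀ − F·A⁻¹·B‖₂ ≤ ‖W‖₂·‖A·Wᵀ − B‖₂ + ‖B‖₂·‖A⁻¹‖₂·‖W·A − F‖₂. -/
open Matrix

noncomputable def matrixSpectralNorm {m n : ℕ} (M : Matrix (Fin m) (Fin n) ℝ) : ℝ :=
  ‖LinearMap.toContinuousLinearMap (Matrix.toEuclideanLin M)‖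

/-! Inserting `± W B` splits the difference into a term carrying the SKI error `A Y - B`
and a term carrying the interpolation error `W A - F`; the triangle inequality and
submultiplicativity of the spectral norm then bound each term separately. -/

namespace Matrix

variable {m k n R 𝕜 : Type*}

theorem mul_mul_sub_mul_nonsing_inv_mul [Fintype k] [DecidableEq k] [CommRing R]
    (W : Matrix m k R) (A : Matrix k k R) (Y : Matrix k n R) (F : Matrix m k R)
    (B : Matrix k n R) (hA : IsUnit A.det) :
    W * A * Y - F * A⁻¹ * B = W * (A * Y - B) + (W * A - F) * (A⁻¹ * B) := by
  rw [Matrix.mul_sub, Matrix.sub_mul, Matrix.mul_assoc W A, Matrix.mul_assoc W A,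
    Matrix.mul_nonsing_inv_cancel_left _ _ hA, Matrix.mul_assoc F]
  abel

open scoped Matrix.Norms.L2Operator

theorem l2_opNorm_mul_mul_sub_mul_nonsing_inv_mul_le [Fintype m] [Fintype k] [Fintype n]
    [DecidableEq k] [DecidableEq n] [RCLike 𝕜]
    (W : Matrix m k 𝕜) (A : Matrix k k 𝕜) (Y : Matrix k n 𝕜) (F : Matrix m k 𝕜)
    (B : Matrix k n 𝕜) (hA : IsUnit A.det) :
    ‖W * A * Y - F * A⁻¹ * B‖ ≤ ‖W‖ * ‖A * Y - B‖ + ‖B‖ * ‖A⁻¹‖ * ‖W * A - F‖ := by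
  rw [mul_mul_sub_mul_nonsing_inv_mul W A Y F B hA]
  calc ‖W * (A * Y - B) + (W * A - F) * (A⁻¹ * B)‖
      ≤ ‖W * (A * Y - B)‖ + ‖(W * A - F) * (A⁻¹ * B)‖ := norm_add_le _ _
    _ ≤ ‖W‖ * ‖A * Y - B‖ + ‖W * A - F‖ * (‖A⁻¹‖ * ‖B‖) := by
        gcongr
        · exact l2_opNorm_mul _ _
        · exact (l2_opNorm_mul _ _).trans (by gcongr; exact l2_opNorm_mul _ _)
    _ = ‖W‖ * ‖A * Y - B‖ + ‖B‖ * ‖A⁻¹‖ * ‖W * A - F‖ := by ring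

end Matrix

open scoped Matrix.Norms.L2Operator in
theorem matrixSpectralNorm_eq_l2_opNorm {m n : ℕ} (M : Matrix (Fin m) (Fin n) ℝ) :
    matrixSpectralNorm M = ‖M‖ :=
  (l2_opNorm_def M).symm

/-- Alternate bound on the spectral norm of the difference between the SKI
approximation `W A Wᵀ` and the Nyström approximation `F A⁻¹ B`:
`‖W A Wᵀ - F A⁻¹ B‖₂ ≤ ‖W‖₂ ‖A Wᵀ - B‖₂ + ‖B‖₂ ‖A⁻¹‖₂ ‖W A - F‖₂`. -/
theorem ski_nystrom_diff_bound' {n r : ℕ}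
    (W F : Matrix (Fin n) (Fin r) ℝ) (B : Matrix (Fin r) (Fin n) ℝ)
    (A : Matrix (Fin r) (Fin r) ℝ) (hA : IsUnit A.det) :
    matrixSpectralNorm (W * A * Wᵀ - F * A⁻¹ * B) ≤
      matrixSpectralNorm W * matrixSpectralNorm (A * Wᵀ - B) +
        matrixSpectralNorm B * matrixSpectralNorm A⁻¹ * matrixSpectralNorm (W * A - F) := by
  simp only [matrixSpectralNorm_eq_l2_opNorm]
  exact l2_opNorm_mul_mul_sub_mul_nonsing_inv_mul_le W A Wᵀ F B hA
end

section
/- Let k̂ : ℂ → ℂ be an entire function satisfying k̂(z + 2π) = k̂(z) for all z ∈ ℂ, and define the signal k : ℤ → ℂ by k[n] = (1/(2π))·∫_{−π}^{π} k̂(ω)·exp(i·ω·n) dω. Then for every a > 0 there exists a constant C ≥ 0 such that |k[n]| ≤ C·exp(−a·|n|) for all n ∈ ℤ. -/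
/-!
Shifting the contour of the Fourier-coefficient integral to the horizontal line `Im z = b`
costs nothing: the integrand `k̂(z) e^{izn}` is entire and `2π`-periodic, so the contributions
of the two vertical sides of the rectangle cancel. On the shifted line `|e^{izn}| = e^{-bn}`,
and taking `b = ±a` with the sign of `n` gives the bound `C e^{-a|n|}`, where `C` bounds `k̂`
on the compact strip `|Re z| ≤ π, |Im z| ≤ a`.
-/

open Complex Function Set
open scoped Real Interval

theorem exists_abs_le_and_mul_eq_mul_abs {α : Type*} [Ring α] [LinearOrder α]
    [IsStrictOrderedRing α] {a : α} (ha : 0 ≤ a) (x : α) : ∃ b : α, |b| ≤ a ∧ b * x = a * |x| := by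
  refine ⟨a * SignType.sign x, ?_, by rw [mul_assoc, sign_mul_self]⟩
  rcases lt_trichotomy x 0 with h | h | h <;> simp [h, abs_of_nonneg ha, ha]

theorem integral_add_mul_I_eq_of_eqOn_vertical_sides {E : Type*} [NormedAddCommGroup E]
    [NormedSpace ℂ E] [CompleteSpace E] {f : ℂ → E} {x₀ x₁ b : ℝ}
    (hf : DifferentiableOn ℂ f ([[x₀, x₁]] ×ℂ [[0, b]]))
    (hsides : ∀ y : ℝ, f (x₁ + y * I) = f (x₀ + y * I)) :
    ∫ x : ℝ in x₀..x₁, f (x + b * I) = ∫ x : ℝ in x₀..x₁, f x := by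
  have hrect := integral_boundary_rect_eq_zero_of_differentiableOn f ⟨x₀, 0⟩ ⟨x₁, b⟩ hf
  simp only [hsides, ofReal_zero, zero_mul, add_zero, add_sub_cancel_right,
    sub_eq_zero] at hrect
  exact hrect.symm

theorem Function.Periodic.mul_cexp_int_mul {f : ℂ → ℂ} (hper : Periodic f (2 * π)) (n : ℤ) :
    Periodic (fun z => f z * exp (I * z * n)) (2 * π) := by
  refine hper.mul fun z => ?_
  rw [show I * (z + 2 * π) * n = I * z * n + n * (2 * π * I) by ring, exp_add,
    exp_int_mul_two_pi_mul_I, mul_one]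

theorem norm_integral_mul_cexp_le {f : ℂ → ℂ} (hf : Differentiable ℂ f)
    (hper : Periodic f (2 * π)) (n : ℤ) {b M : ℝ}
    (hM : ∀ x ∈ Icc (-π) π, ‖f (x + b * I)‖ ≤ M) :
    ‖∫ x in (-π : ℝ)..π, f x * exp (I * x * n)‖ ≤ 2 * π * M * Real.exp (-(b * n)) := by
  set g : ℂ → ℂ := fun z => f z * exp (I * z * n)
  have hg : Periodic g (2 * π) := hper.mul_cexp_int_mul n
  have hg_diff : Differentiable ℂ g := hf.mul (by fun_prop)
  have hsides (y : ℝ) : g ((π : ℝ) + y * I) = g ((-π : ℝ) + y * I) := by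
    rw [← hg ((-π : ℝ) + y * I)]
    congr 1
    push_cast
    ring
  change ‖∫ x in (-π : ℝ)..π, g x‖ ≤ _
  rw [← integral_add_mul_I_eq_of_eqOn_vertical_sides hg_diff.differentiableOn hsides]
  have hline : ∀ x ∈ Ι (-π) π, ‖g (x + b * I)‖ ≤ M * Real.exp (-(b * n)) := by
    intro x hx
    have hexp : ‖exp (I * (x + b * I) * n)‖ = Real.exp (-(b * n)) := by
      simp [norm_exp, mul_re, mul_im]
    rw [norm_mul, hexp]
    gcongr
    exact hM x (uIoc_subset_uIcc.trans (uIcc_of_le (by linarith [Real.pi_pos])).subset hx)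
  calc _ ≤ M * Real.exp (-(b * n)) * |π - -π| :=
        intervalIntegral.norm_integral_le_of_norm_le_const hline
    _ = 2 * π * M * Real.exp (-(b * n)) := by
        rw [abs_of_nonneg (by linarith [Real.pi_pos])]
        ring

/-- If the DTFT `k̂` is (the restriction to ℝ of) an entire `2π`-periodic
function, then the signal `k[n] = (1/2π) ∫_{-π}^{π} k̂(ω) e^{iωn} dω` decays
faster than any exponential rate: for every `a > 0` there is `C ≥ 0` with
`|k[n]| ≤ C e^{-a|n|}` for all `n ∈ ℤ`. -/
theorem entire_dtft_signal_exponential_decay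
    (khat : ℂ → ℂ) (hent : Differentiable ℂ khat)
    (hper : ∀ z : ℂ, khat (z + 2 * π) = khat z)
    (k : ℤ → ℂ)
    (hk : ∀ n : ℤ, k n =
      (1 / (2 * π) : ℂ) *
        ∫ ω in (-π : ℝ)..π, khat ω * Complex.exp (Complex.I * ω * n)) :
    ∀ a : ℝ, 0 < a → ∃ C : ℝ, 0 ≤ C ∧
      ∀ n : ℤ, ‖k n‖ ≤ C * Real.exp (-a * |(n : ℝ)|) := by
  intro a ha
  obtain ⟨M, hM⟩ := (isCompact_closedBall (0 : ℂ) (π + a)).exists_bound_of_continuousOn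
    hent.continuous.continuousOn
  have hM₀ : 0 ≤ M :=
    (norm_nonneg _).trans (hM 0 (Metric.mem_closedBall_self (by positivity)))
  refine ⟨M, hM₀, fun n => ?_⟩
  obtain ⟨b, hba, hbn⟩ := exists_abs_le_and_mul_eq_mul_abs ha.le (n : ℝ)
  have hline : ∀ x ∈ Icc (-π) π, ‖khat (x + b * I)‖ ≤ M := by
    refine fun x hx => hM _ (mem_closedBall_zero_iff.2 ?_)
    calc ‖(x : ℂ) + b * I‖ ≤ |x| + |b| := by simpa using norm_add_le (x : ℂ) (b * I)
      _ ≤ π + a := add_le_add (abs_le.2 hx) hba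
  calc ‖k n‖ = ‖∫ x in (-π : ℝ)..π, khat x * exp (I * x * n)‖ / (2 * π) := by
        rw [hk n, norm_mul]
        simp [abs_of_pos Real.pi_pos, div_eq_inv_mul]
    _ ≤ 2 * π * M * Real.exp (-(b * n)) / (2 * π) := by
        gcongr
        exact norm_integral_mul_cexp_le hent hper n hline
    _ = M * Real.exp (-a * |(n : ℝ)|) := by
        rw [hbn, neg_mul]
        field_simp
end
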